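/- arXiv:1902.02584 — 3 statements merged into one kernel-verified Lean document; each statement's English description precedes it below -/
import Mathlib

section
/- For each c_e ∈ (0, c_*), the function q ↦ ρ(q²)·(A(c_e) − A(q)) is strictly decreasing on (0, c_e), tends to +∞ as q → 0⁺, and equals 0 at q = c_e; hence there is a unique root c_l ∈ (0, c_e) of the equation ρ(c_l²)·(A(c_e) − A(c_l)) = 1. -/
/-!
Write `u = 1 - (γ-1)q²/2`, so that `ρ(q²) = u^{1/(γ-1)}` and `ρ' = -ρ/(2u)`. The integrand of `A`
then simplifies to `(1 - (γ+1)q²/2) / (q u ρ(q²))`, which is positive for `q < c_*` and at least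
`(1 - (γ+1)c_e²/2) / q` on `(0, c_e]`. Hence `A` is strictly increasing on `(0, c_*)` and
`A(c_e) - A(q)` grows like a positive multiple of `log (c_e / q)`. Since `ρ(q²)` is positive and
decreasing, the product `ρ(q²)(A(c_e) - A(q))` is strictly decreasing on `(0, c_e)` and blows up
at `0⁺`; the intermediate value theorem gives the root.
-/

open Set Filter Topology

/-- Bernoulli density as a function of `t = q²`. -/
noncomputable def rho (γ t : ℝ) : ℝ := (1 - (γ - 1) / 2 * t) ^ ((1 : ℝ) / (γ - 1))

/-- Critical (sonic) speed. -/
noncomputable def cstar (γ : ℝ) : ℝ := Real.sqrt (2 / (γ + 1))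

/-- `A(q) = ∫_{c_*}^q (ρ(s²) + 2s²ρ'(s²))/(s ρ²(s²)) ds`. -/
noncomputable def Afun (γ q : ℝ) : ℝ :=
  ∫ s in (cstar γ)..q,
    (rho γ (s ^ 2) + 2 * s ^ 2 * deriv (rho γ) (s ^ 2)) / (s * (rho γ (s ^ 2)) ^ 2)

/-- The limit speed, at which the density vanishes. -/
noncomputable def qmax (γ : ℝ) : ℝ := Real.sqrt (2 / (γ - 1))

noncomputable def integrandA (γ s : ℝ) : ℝ :=
  (1 - (γ + 1) / 2 * s ^ 2) / (s * (1 - (γ - 1) / 2 * s ^ 2) * rho γ (s ^ 2))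

section rho

variable {γ t t' : ℝ}

lemma rho_pos (ht : (γ - 1) / 2 * t < 1) : 0 < rho γ t :=
  Real.rpow_pos_of_pos (by linarith) _

lemma rho_le_rho (hγ : 1 ≤ γ) (htt' : t ≤ t') (ht' : (γ - 1) / 2 * t' ≤ 1) :
    rho γ t' ≤ rho γ t :=
  Real.rpow_le_rpow (by linarith) (by nlinarith) (one_div_nonneg.2 (by linarith))

lemma rho_le_one (hγ : 1 ≤ γ) (ht : 0 ≤ t) (ht' : (γ - 1) / 2 * t ≤ 1) : rho γ t ≤ 1 :=
  Real.rpow_le_one (by linarith) (by nlinarith) (one_div_nonneg.2 (by linarith))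

lemma hasDerivAt_rho (hγ : γ ≠ 1) (ht : (γ - 1) / 2 * t < 1) :
    HasDerivAt (rho γ) (-rho γ t / (2 * (1 - (γ - 1) / 2 * t))) t := by
  have hu : 1 - (γ - 1) / 2 * t ≠ 0 := by linarith
  have hlin : HasDerivAt (fun t : ℝ => 1 - (γ - 1) / 2 * t) (-((γ - 1) / 2)) t := by
    simpa using ((hasDerivAt_id t).const_mul ((γ - 1) / 2)).const_sub 1
  refine (hlin.rpow_const (p := 1 / (γ - 1)) (Or.inl hu)).congr_deriv ?_
  rw [Real.rpow_sub_one hu, rho]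
  field_simp

lemma continuousAt_rho_sq (hγ : γ ≠ 1) {q : ℝ} (hq : (γ - 1) / 2 * q ^ 2 < 1) :
    ContinuousAt (fun q => rho γ (q ^ 2)) q :=
  (hasDerivAt_rho hγ hq).continuousAt.comp (f := fun q : ℝ => q ^ 2)
    (continuous_pow 2).continuousAt

end rho

section integrand

variable {γ s : ℝ}

lemma integrand_eq_integrandA (hγ : γ ≠ 1) (hs : 0 < s) (hs2 : (γ - 1) / 2 * s ^ 2 < 1) :
    (rho γ (s ^ 2) + 2 * s ^ 2 * deriv (rho γ) (s ^ 2)) / (s * (rho γ (s ^ 2)) ^ 2)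
      = integrandA γ s := by
  have hu : 1 - (γ - 1) / 2 * s ^ 2 ≠ 0 := by linarith
  have hρ := (rho_pos hs2).ne'
  rw [(hasDerivAt_rho hγ hs2).deriv, integrandA]
  set u := 1 - (γ - 1) / 2 * s ^ 2 with hu_def
  rw [show 1 - (γ + 1) / 2 * s ^ 2 = u - s ^ 2 by rw [hu_def]; ring]
  field_simp
  ring

lemma integrandA_pos (hs : 0 < s) (hs2 : (γ + 1) / 2 * s ^ 2 < 1) : 0 < integrandA γ s := by
  have hu : 0 < 1 - (γ - 1) / 2 * s ^ 2 := by nlinarith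
  have hρ := rho_pos (γ := γ) (t := s ^ 2) (by linarith)
  unfold integrandA
  apply div_pos (by linarith)
  positivity

lemma div_le_integrandA (hγ : 1 ≤ γ) {c : ℝ} (hs : 0 < s) (hsc : s ≤ c)
    (hc : (γ + 1) / 2 * c ^ 2 ≤ 1) : (1 - (γ + 1) / 2 * c ^ 2) / s ≤ integrandA γ s := by
  have hsc2 : s ^ 2 ≤ c ^ 2 := pow_le_pow_left₀ hs.le hsc 2
  have hs2 : (γ - 1) / 2 * s ^ 2 < 1 := by nlinarith
  have hu : 0 < 1 - (γ - 1) / 2 * s ^ 2 := by linarith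
  have hρ := rho_pos hs2
  have hρ1 := rho_le_one hγ (sq_nonneg s) hs2.le
  have huρ : (1 - (γ - 1) / 2 * s ^ 2) * rho γ (s ^ 2) ≤ 1 :=
    mul_le_one₀ (by nlinarith) hρ.le hρ1
  rw [integrandA, mul_assoc]
  apply div_le_div₀ (by nlinarith) (by nlinarith) (by positivity)
  exact mul_le_of_le_one_right hs.le huρ

end integrand

section domain

variable {γ q : ℝ}

lemma mul_sq_lt_one_of_mem_Ioo_qmax (hγ : 1 < γ) (hq : q ∈ Ioo 0 (qmax γ)) :
    (γ - 1) / 2 * q ^ 2 < 1 := by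
  have h := (Real.lt_sqrt hq.1.le).1 hq.2
  rw [lt_div_iff₀ (by linarith)] at h
  linarith

lemma mul_sq_lt_one_of_lt_cstar (hγ : -1 < γ) (hq0 : 0 ≤ q) (hq : q < cstar γ) :
    (γ + 1) / 2 * q ^ 2 < 1 := by
  have h := (Real.lt_sqrt hq0).1 hq
  rw [lt_div_iff₀ (by linarith)] at h
  linarith

lemma cstar_lt_qmax (hγ : 1 < γ) : cstar γ < qmax γ :=
  Real.sqrt_lt_sqrt (by positivity) (div_lt_div_of_pos_left two_pos (by linarith) (by linarith))

lemma cstar_mem_Ioo_qmax (hγ : 1 < γ) : cstar γ ∈ Ioo 0 (qmax γ) :=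
  ⟨Real.sqrt_pos.2 (by positivity), cstar_lt_qmax hγ⟩

lemma Ioo_cstar_subset_Ioo_qmax (hγ : 1 < γ) : Ioo 0 (cstar γ) ⊆ Ioo 0 (qmax γ) :=
  Ioo_subset_Ioo_right (cstar_lt_qmax hγ).le

lemma mul_sq_lt_one_of_mem_Ioo_cstar (hγ : 1 < γ) (hq : q ∈ Ioo 0 (cstar γ)) :
    (γ - 1) / 2 * q ^ 2 < 1 :=
  mul_sq_lt_one_of_mem_Ioo_qmax hγ (Ioo_cstar_subset_Ioo_qmax hγ hq)

end domain

section Afun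

variable {γ : ℝ}

lemma continuousOn_integrandA (hγ : 1 < γ) : ContinuousOn (integrandA γ) (Ioo 0 (qmax γ)) := by
  intro s hs
  have hs2 := mul_sq_lt_one_of_mem_Ioo_qmax hγ hs
  have hden : s * (1 - (γ - 1) / 2 * s ^ 2) * rho γ (s ^ 2) ≠ 0 :=
    (mul_pos (mul_pos hs.1 (by linarith)) (rho_pos hs2)).ne'
  refine ContinuousAt.continuousWithinAt (ContinuousAt.div (by fun_prop) ?_ hden)
  exact ((continuous_id.mul (by fun_prop)).continuousAt).mul (continuousAt_rho_sq hγ.ne' hs2)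

lemma intervalIntegrable_integrandA (hγ : 1 < γ) {a b : ℝ} (ha : a ∈ Ioo 0 (qmax γ))
    (hb : b ∈ Ioo 0 (qmax γ)) : IntervalIntegrable (integrandA γ) MeasureTheory.volume a b :=
  ((continuousOn_integrandA hγ).mono (ordConnected_Ioo.uIcc_subset ha hb)).intervalIntegrable

lemma Afun_eq_integral (hγ : 1 < γ) {q : ℝ} (hq : q ∈ Ioo 0 (qmax γ)) :
    Afun γ q = ∫ s in cstar γ..q, integrandA γ s := by
  refine intervalIntegral.integral_congr fun s hs => ?_
  have hs' := ordConnected_Ioo.uIcc_subset (cstar_mem_Ioo_qmax hγ) hq hs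
  exact integrand_eq_integrandA hγ.ne' hs'.1 (mul_sq_lt_one_of_mem_Ioo_qmax hγ hs')

lemma Afun_sub_eq_integral (hγ : 1 < γ) {a b : ℝ} (ha : a ∈ Ioo 0 (qmax γ))
    (hb : b ∈ Ioo 0 (qmax γ)) : Afun γ b - Afun γ a = ∫ s in a..b, integrandA γ s := by
  rw [Afun_eq_integral hγ hb, Afun_eq_integral hγ ha]
  exact intervalIntegral.integral_interval_sub_left
    (intervalIntegrable_integrandA hγ (cstar_mem_Ioo_qmax hγ) hb)
    (intervalIntegrable_integrandA hγ (cstar_mem_Ioo_qmax hγ) ha)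

lemma hasDerivAt_Afun (hγ : 1 < γ) {q : ℝ} (hq : q ∈ Ioo 0 (qmax γ)) :
    HasDerivAt (Afun γ) (integrandA γ q) q := by
  have hint : HasDerivAt (fun x => ∫ s in cstar γ..x, integrandA γ s) (integrandA γ q) q :=
    intervalIntegral.integral_hasDerivAt_right
      (intervalIntegrable_integrandA hγ (cstar_mem_Ioo_qmax hγ) hq)
      ((continuousOn_integrandA hγ).stronglyMeasurableAtFilter isOpen_Ioo q hq)
      ((continuousOn_integrandA hγ).continuousAt (isOpen_Ioo.mem_nhds hq))
  refine hint.congr_of_eventuallyEq ?_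
  filter_upwards [isOpen_Ioo.mem_nhds hq] with x hx
  exact Afun_eq_integral hγ hx

lemma continuousOn_Afun (hγ : 1 < γ) : ContinuousOn (Afun γ) (Ioo 0 (qmax γ)) :=
  fun _ hq => (hasDerivAt_Afun hγ hq).continuousAt.continuousWithinAt

lemma strictMonoOn_Afun (hγ : 1 < γ) : StrictMonoOn (Afun γ) (Ioo 0 (cstar γ)) := by
  refine strictMonoOn_of_deriv_pos (convex_Ioo _ _)
    ((continuousOn_Afun hγ).mono (Ioo_cstar_subset_Ioo_qmax hγ)) fun q hq => ?_
  rw [interior_Ioo] at hq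
  rw [(hasDerivAt_Afun hγ (Ioo_cstar_subset_Ioo_qmax hγ hq)).deriv]
  exact integrandA_pos hq.1 (mul_sq_lt_one_of_lt_cstar (by linarith) hq.1.le hq.2)

lemma mul_log_le_Afun_sub (hγ : 1 < γ) {q c : ℝ} (hq : 0 < q) (hqc : q ≤ c)
    (hc : c < cstar γ) :
    (1 - (γ + 1) / 2 * c ^ 2) * Real.log (c / q) ≤ Afun γ c - Afun γ q := by
  have hsub := Ioo_cstar_subset_Ioo_qmax hγ
  have hq' : q ∈ Ioo 0 (qmax γ) := hsub ⟨hq, hqc.trans_lt hc⟩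
  have hc' : c ∈ Ioo 0 (qmax γ) := hsub ⟨hq.trans_le hqc, hc⟩
  have hc2 := (mul_sq_lt_one_of_lt_cstar (by linarith) (hq.le.trans hqc) hc).le
  rw [Afun_sub_eq_integral hγ hq' hc', ← integral_inv_of_pos hq (hq.trans_le hqc),
    ← intervalIntegral.integral_const_mul]
  refine intervalIntegral.integral_mono_on hqc ?_ (intervalIntegrable_integrandA hγ hq' hc')
    fun s hs => ?_
  · exact (continuousOn_const.mul (continuousOn_inv₀.mono fun s hs =>
      (hq.trans_le (uIcc_of_le hqc ▸ hs).1).ne')).intervalIntegrable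
  · rw [← div_eq_mul_inv]
    exact div_le_integrandA hγ.le (hq.trans_le hs.1) hs.2 hc2

lemma tendsto_Afun_sub_atTop (hγ : 1 < γ) {c : ℝ} (hc : c ∈ Ioo 0 (cstar γ)) :
    Tendsto (fun q => Afun γ c - Afun γ q) (𝓝[>] 0) atTop := by
  have hK : 0 < 1 - (γ + 1) / 2 * c ^ 2 := by
    linarith [mul_sq_lt_one_of_lt_cstar (by linarith) hc.1.le hc.2]
  have hlog :
      Tendsto (fun q => (1 - (γ + 1) / 2 * c ^ 2) * Real.log (c / q)) (𝓝[>] 0) atTop := by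
    refine Tendsto.const_mul_atTop hK (Real.tendsto_log_atTop.comp ?_)
    exact (tendsto_inv_nhdsGT_zero.const_mul_atTop hc.1).congr fun q => (div_eq_mul_inv c q).symm
  refine tendsto_atTop_mono' _ ?_ hlog
  filter_upwards [Ioo_mem_nhdsGT hc.1] with q hq
  exact mul_log_le_Afun_sub hγ hq.1 hq.2.le hc.2

end Afun

section product

variable {γ c : ℝ}

lemma strictAntiOn_rho_sq_mul_Afun_sub (hγ : 1 < γ) (hc : c < cstar γ) :
    StrictAntiOn (fun q => rho γ (q ^ 2) * (Afun γ c - Afun γ q)) (Ioo 0 c) := by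
  intro a ha b hb hab
  have ha' : a ∈ Ioo 0 (cstar γ) := ⟨ha.1, ha.2.trans hc⟩
  have hb' : b ∈ Ioo 0 (cstar γ) := ⟨hb.1, hb.2.trans hc⟩
  have hA : Afun γ a < Afun γ b := strictMonoOn_Afun hγ ha' hb' hab
  have hAb : Afun γ b < Afun γ c := strictMonoOn_Afun hγ hb' ⟨hb.1.trans hb.2, hc⟩ hb.2
  have hρ : rho γ (b ^ 2) ≤ rho γ (a ^ 2) := rho_le_rho hγ.le
    (pow_le_pow_left₀ ha.1.le hab.le 2) (mul_sq_lt_one_of_mem_Ioo_cstar hγ hb').le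
  have hρa : 0 < rho γ (a ^ 2) := rho_pos (mul_sq_lt_one_of_mem_Ioo_cstar hγ ha')
  calc rho γ (b ^ 2) * (Afun γ c - Afun γ b)
      ≤ rho γ (a ^ 2) * (Afun γ c - Afun γ b) := by gcongr
    _ < rho γ (a ^ 2) * (Afun γ c - Afun γ a) := by gcongr

lemma tendsto_rho_sq_mul_Afun_sub_atTop (hγ : 1 < γ) (hc : c ∈ Ioo 0 (cstar γ)) :
    Tendsto (fun q => rho γ (q ^ 2) * (Afun γ c - Afun γ q)) (𝓝[>] 0) atTop := by
  have hρc : 0 < rho γ (c ^ 2) := rho_pos (mul_sq_lt_one_of_mem_Ioo_cstar hγ hc)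
  refine tendsto_atTop_mono' _ ?_ ((tendsto_Afun_sub_atTop hγ hc).const_mul_atTop hρc)
  filter_upwards [Ioo_mem_nhdsGT hc.1] with q hq
  have hA : Afun γ q < Afun γ c := strictMonoOn_Afun hγ ⟨hq.1, hq.2.trans hc.2⟩ hc hq.2
  have hρ : rho γ (c ^ 2) ≤ rho γ (q ^ 2) := rho_le_rho hγ.le
    (pow_le_pow_left₀ hq.1.le hq.2.le 2) (mul_sq_lt_one_of_mem_Ioo_cstar hγ hc).le
  gcongr

lemma continuousOn_rho_sq_mul_Afun_sub (hγ : 1 < γ) (hc : c < qmax γ) :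
    ContinuousOn (fun q => rho γ (q ^ 2) * (Afun γ c - Afun γ q)) (Ioc 0 c) := by
  have hsub : Ioc 0 c ⊆ Ioo 0 (qmax γ) := Ioc_subset_Ioo_right hc
  refine ContinuousOn.mul (fun q hq => ?_)
    (continuousOn_const.sub ((continuousOn_Afun hγ).mono hsub))
  exact (continuousAt_rho_sq hγ.ne'
    (mul_sq_lt_one_of_mem_Ioo_qmax hγ (hsub hq))).continuousWithinAt

end product

lemma existsUnique_eq_of_strictAntiOn_of_tendsto_atTop {f : ℝ → ℝ} {a b y : ℝ} (hab : a < b)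
    (hcont : ContinuousOn f (Ioc a b)) (hanti : StrictAntiOn f (Ioo a b))
    (hlim : Tendsto f (𝓝[>] a) atTop) (hfb : f b < y) : ∃! x, x ∈ Ioo a b ∧ f x = y := by
  obtain ⟨x₀, hx₀y, hx₀⟩ :=
    ((hlim.eventually_gt_atTop y).and (Ioo_mem_nhdsGT hab)).exists
  obtain ⟨x, hx, hfx⟩ := intermediate_value_Icc' hx₀.2.le
    (hcont.mono (Icc_subset_Ioc_left hx₀.1)) ⟨hfb.le, hx₀y.le⟩
  have hxb : x ≠ b := by rintro rfl; exact hfb.ne hfx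
  have hxmem : x ∈ Ioo a b := ⟨hx₀.1.trans_le hx.1, lt_of_le_of_ne hx.2 hxb⟩
  exact ⟨x, ⟨hxmem, hfx⟩, fun z ⟨hz, hfz⟩ => hanti.injOn hz hxmem (hfz.trans hfx.symm)⟩

/-- For `c_e ∈ (0, c_*)`, the function `q ↦ ρ(q²)(A(c_e) − A(q))` is strictly
decreasing on `(0, c_e)`, tends to `+∞` as `q → 0⁺`, vanishes at `c_e`, and hence
has a unique root `c_l ∈ (0, c_e)` of `ρ(c_l²)(A(c_e) − A(c_l)) = 1`. -/
theorem stmt_6 (γ : ℝ) (hγ : 1 < γ) (c_e : ℝ) (hce : c_e ∈ Ioo (0 : ℝ) (cstar γ)) :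
    StrictAntiOn (fun q => rho γ (q ^ 2) * (Afun γ c_e - Afun γ q)) (Ioo (0 : ℝ) c_e) ∧
    Tendsto (fun q => rho γ (q ^ 2) * (Afun γ c_e - Afun γ q)) (nhdsWithin 0 (Ioi 0)) atTop ∧
    rho γ (c_e ^ 2) * (Afun γ c_e - Afun γ c_e) = 0 ∧
    (∃! c_l : ℝ, c_l ∈ Ioo (0 : ℝ) c_e ∧ rho γ (c_l ^ 2) * (Afun γ c_e - Afun γ c_l) = 1) := by
  have hanti := strictAntiOn_rho_sq_mul_Afun_sub hγ hce.2
  have hlim := tendsto_rho_sq_mul_Afun_sub_atTop hγ hce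
  have hcont := continuousOn_rho_sq_mul_Afun_sub hγ (hce.2.trans (cstar_lt_qmax hγ))
  refine ⟨hanti, hlim, by simp, ?_⟩
  exact existsUnique_eq_of_strictAntiOn_of_tendsto_atTop hce.1 hcont hanti hlim (by simp)
end

section
/- Let G ⊂ ℝ² be an open disc of radius r centered at the origin, b ∈ C²(closure of the annulus G* = {x ∈ G : |x| > r/2}) with 0 < b₁ ≤ b ≤ b₂ on G*. Then there exists β > 0, depending only on r, b₁, b₂ and the C² norm of b, such that the function Q̃(φ,ψ) = e^{−βr²} − e^{−β(φ²+ψ²)} satisfies ∂²Q̃/∂φ² + ∂²(b·Q̃)/∂ψ² ≤ 0 on G*. -/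
/-!
Writing `E = e^{-β(φ²+ψ²)}`, one computes
`∂²Q̃/∂φ² + ∂²(bQ̃)/∂ψ² = (2β - 4β²φ²)E + b_ψψ Q̃ + 4βψ b_ψ E + b (2β - 4β²ψ²)E`.
The only terms of order `β²` are `-4β²(φ² + bψ²)E ≤ -β² min(1, b₁) r² E`, since
`φ² + ψ² > r²/4` on the annulus; all remaining terms are `O(β)E` with constants depending on
`r, b₂` and the bounds on `b_ψ, b_ψψ`. Hence the negative quadratic term wins for large `β`.
-/

open Real Filter Topology

theorem deriv_deriv_mul {f g g' : ℝ → ℝ} {g'' x : ℝ}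
    (hf : ∀ᶠ y in 𝓝 x, DifferentiableAt ℝ f y) (hf' : DifferentiableAt ℝ (deriv f) x)
    (hg : ∀ᶠ y in 𝓝 x, HasDerivAt g (g' y) y) (hg' : HasDerivAt g' g'' x) :
    deriv (deriv fun y => f y * g y) x =
      deriv (deriv f) x * g x + 2 * (deriv f x * g' x) + f x * g'' := by
  have hderiv : deriv (fun y => f y * g y) =ᶠ[𝓝 x] fun y => deriv f y * g y + f y * g' y :=
    (hf.and hg).mono fun y ⟨hfy, hgy⟩ => (hfy.hasDerivAt.mul hgy).deriv
  rw [hderiv.deriv_eq]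
  have hgx : HasDerivAt g (g' x) x := hg.self_of_nhds
  refine ((hf'.hasDerivAt.mul hgx).add (hf.self_of_nhds.hasDerivAt.mul hg')).deriv.trans ?_
  ring

theorem hasDerivAt_exp_neg_mul_sq_add (β a x : ℝ) :
    HasDerivAt (fun t => exp (-β * (t ^ 2 + a))) (-(2 * β * x * exp (-β * (x ^ 2 + a)))) x := by
  have hinner : HasDerivAt (fun t => -β * (t ^ 2 + a)) (-β * (2 * x)) x := by
    simpa using ((hasDerivAt_pow 2 x).add_const a).const_mul (-β)
  exact hinner.exp.congr_deriv (by ring)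

theorem hasDerivAt_const_sub_exp_neg_mul_sq_add (β a c x : ℝ) :
    HasDerivAt (fun t => c - exp (-β * (t ^ 2 + a))) (2 * β * x * exp (-β * (x ^ 2 + a))) x :=
  ((hasDerivAt_exp_neg_mul_sq_add β a x).const_sub c).congr_deriv (neg_neg _)

theorem hasDerivAt_mul_exp_neg_mul_sq_add (β a x : ℝ) :
    HasDerivAt (fun t => 2 * β * t * exp (-β * (t ^ 2 + a)))
      ((2 * β - 4 * β ^ 2 * x ^ 2) * exp (-β * (x ^ 2 + a))) x :=
  (((hasDerivAt_id' x).const_mul (2 * β)).mul (hasDerivAt_exp_neg_mul_sq_add β a x)).congr_deriv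
    (by ring)

theorem deriv_deriv_const_sub_exp_neg_mul_sq_add (β a c x : ℝ) :
    deriv (deriv fun t => c - exp (-β * (t ^ 2 + a))) x =
      (2 * β - 4 * β ^ 2 * x ^ 2) * exp (-β * (x ^ 2 + a)) := by
  have hderiv : deriv (fun t => c - exp (-β * (t ^ 2 + a))) =
      fun t => 2 * β * t * exp (-β * (t ^ 2 + a)) :=
    funext fun t => (hasDerivAt_const_sub_exp_neg_mul_sq_add β a c t).deriv
  rw [hderiv]
  exact (hasDerivAt_mul_exp_neg_mul_sq_add β a x).deriv

theorem exists_pos_mul_add_le_mul_sq (A K : ℝ) {c : ℝ} (hc : 0 < c) :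
    ∃ β > 0, A * β + K ≤ c * β ^ 2 := by
  set β := max 1 ((|A| + |K|) / c)
  have hβ1 : 1 ≤ β := le_max_left _ _
  have hβc : |A| + |K| ≤ c * β := by
    rw [← div_le_iff₀' hc]
    exact le_max_right _ _
  refine ⟨β, by linarith, ?_⟩
  calc A * β + K ≤ |A| * β + |K| * β := by
        gcongr
        · exact le_abs_self A
        · exact (le_abs_self K).trans (le_mul_of_one_le_right (abs_nonneg K) hβ1)
    _ = (|A| + |K|) * β := by ring
    _ ≤ c * β * β := by gcongr
    _ = c * β ^ 2 := by ring

/-- `B, B', B''` stand for `b, b_ψ, b_ψψ` at `(φ, ψ)`, `C` for `e^{-βr²}` and `E` for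
`e^{-β(φ²+ψ²)}`. -/
theorem barrier_operator_le {β r m b₁ b₂ K₁ K₂ φ ψ B B' B'' C E : ℝ}
    (hβ : 0 < β) (hC : 0 ≤ C) (hCE : C ≤ E) (hB₁ : b₁ ≤ B) (hB₂ : B ≤ b₂)
    (hB' : |B'| ≤ K₁) (hB'' : |B''| ≤ K₂) (hψ : |ψ| ≤ r)
    (hm : m * r ^ 2 / 4 ≤ φ ^ 2 + b₁ * ψ ^ 2) :
    (2 * β - 4 * β ^ 2 * φ ^ 2) * E +
        (B'' * (C - E) + 2 * (B' * (2 * β * ψ * E)) + B * ((2 * β - 4 * β ^ 2 * ψ ^ 2) * E)) ≤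
      E * ((2 + 4 * r * K₁ + 2 * b₂) * β + K₂ - m * r ^ 2 * β ^ 2) := by
  have hE : 0 ≤ E := hC.trans hCE
  have hsecond : B'' * (C - E) ≤ K₂ * E :=
    calc B'' * (C - E) ≤ |B''| * |C - E| := (le_abs_self _).trans (abs_mul _ _).le
      _ ≤ K₂ * E := by
        have : 0 ≤ K₂ := (abs_nonneg _).trans hB''
        gcongr
        rw [abs_of_nonpos (by linarith)]
        linarith
  have hfirst : ψ * B' ≤ r * K₁ :=
    calc ψ * B' ≤ |ψ| * |B'| := (le_abs_self _).trans (abs_mul _ _).le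
      _ ≤ r * K₁ := mul_le_mul hψ hB' (abs_nonneg _) ((abs_nonneg ψ).trans hψ)
  have hquadratic : m * r ^ 2 / 4 ≤ φ ^ 2 + B * ψ ^ 2 := hm.trans (by gcongr)
  have hβE : 0 ≤ β * E := by positivity
  nlinarith [mul_le_mul_of_nonneg_left hfirst hβE, mul_le_mul_of_nonneg_left hB₂ hβE,
    mul_le_mul_of_nonneg_left hquadratic (mul_nonneg hβE hβ.le)]

theorem stmt_10_general (r b₁ b₂ K₁ K₂ : ℝ) (b : ℝ → ℝ → ℝ)
    (hr : 0 < r) (hb₁ : 0 < b₁)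
    (hb : ∀ φ ψ : ℝ, r ^ 2 / 4 < φ ^ 2 + ψ ^ 2 → φ ^ 2 + ψ ^ 2 < r ^ 2 →
      b₁ ≤ b φ ψ ∧ b φ ψ ≤ b₂)
    (hsmooth : ∀ φ ψ : ℝ, r ^ 2 / 4 < φ ^ 2 + ψ ^ 2 → φ ^ 2 + ψ ^ 2 < r ^ 2 →
      DifferentiableAt ℝ (b φ) ψ ∧ DifferentiableAt ℝ (deriv (b φ)) ψ)
    (hK₁ : ∀ φ ψ : ℝ, r ^ 2 / 4 < φ ^ 2 + ψ ^ 2 → φ ^ 2 + ψ ^ 2 < r ^ 2 →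
      |deriv (b φ) ψ| ≤ K₁)
    (hK₂ : ∀ φ ψ : ℝ, r ^ 2 / 4 < φ ^ 2 + ψ ^ 2 → φ ^ 2 + ψ ^ 2 < r ^ 2 →
      |deriv (deriv (b φ)) ψ| ≤ K₂) :
    ∃ β : ℝ, 0 < β ∧
      ∀ φ ψ : ℝ, r ^ 2 / 4 < φ ^ 2 + ψ ^ 2 → φ ^ 2 + ψ ^ 2 < r ^ 2 →
        deriv (deriv (fun x : ℝ =>
            Real.exp (-β * r ^ 2) - Real.exp (-β * (x ^ 2 + ψ ^ 2)))) φ +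
        deriv (deriv (fun y : ℝ =>
            b φ y * (Real.exp (-β * r ^ 2) - Real.exp (-β * (φ ^ 2 + y ^ 2))))) ψ ≤ 0 := by
  set m := min 1 b₁
  obtain ⟨β, hβ, hβlarge⟩ := exists_pos_mul_add_le_mul_sq (2 + 4 * r * K₁ + 2 * b₂) K₂
    (show 0 < m * r ^ 2 by positivity)
  refine ⟨β, hβ, fun φ ψ h₁ h₂ => ?_⟩
  have hannulus : ∀ᶠ y in 𝓝 ψ, r ^ 2 / 4 < φ ^ 2 + y ^ 2 ∧ φ ^ 2 + y ^ 2 < r ^ 2 :=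
    (continuous_const.add (continuous_pow 2)).continuousAt.eventually_mem (Ioo_mem_nhds h₁ h₂)
  simp only [add_comm (φ ^ 2)]
  rw [deriv_deriv_const_sub_exp_neg_mul_sq_add, deriv_deriv_mul
    (hannulus.mono fun y hy => (hsmooth φ y hy.1 hy.2).1) (hsmooth φ ψ h₁ h₂).2
    (.of_forall fun y => hasDerivAt_const_sub_exp_neg_mul_sq_add β (φ ^ 2) _ y)
    (hasDerivAt_mul_exp_neg_mul_sq_add β (φ ^ 2) ψ), add_comm (ψ ^ 2)]
  have hψ : |ψ| ≤ r := abs_le_of_sq_le_sq (by linarith [sq_nonneg φ]) hr.le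
  have hCE : exp (-β * r ^ 2) ≤ exp (-β * (φ ^ 2 + ψ ^ 2)) :=
    exp_le_exp.mpr (by nlinarith)
  have hm : m * r ^ 2 / 4 ≤ φ ^ 2 + b₁ * ψ ^ 2 := by
    have hm₁ : m ≤ 1 := min_le_left _ _
    have hm₂ : m ≤ b₁ := min_le_right _ _
    have hm₀ : 0 ≤ m := le_min zero_le_one hb₁.le
    nlinarith [sq_nonneg φ, sq_nonneg ψ]
  obtain ⟨hB₁, hB₂⟩ := hb φ ψ h₁ h₂
  refine (barrier_operator_le hβ (exp_pos _).le hCE hB₁ hB₂ (hK₁ φ ψ h₁ h₂) (hK₂ φ ψ h₁ h₂)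
    hψ hm).trans (mul_nonpos_of_nonneg_of_nonpos (exp_pos _).le ?_)
  linarith

/-- Barrier construction in the Hopf-lemma argument: on the annulus
`G* = {r²/4 < φ²+ψ² < r²}`, for a `C²` coefficient `b` with `0 < b₁ ≤ b ≤ b₂`
and bounded first and second `ψ`-derivatives, there exists `β > 0` such that
`Q̃(φ,ψ) = e^{−βr²} − e^{−β(φ²+ψ²)}` satisfies
`∂²Q̃/∂φ² + ∂²(b·Q̃)/∂ψ² ≤ 0` on `G*`. -/
theorem stmt_10 (r b₁ b₂ K₁ K₂ : ℝ) (b : ℝ → ℝ → ℝ)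
    (hr : 0 < r) (hb₁ : 0 < b₁) (hb₁₂ : b₁ ≤ b₂)
    (hb : ∀ φ ψ : ℝ, r ^ 2 / 4 < φ ^ 2 + ψ ^ 2 → φ ^ 2 + ψ ^ 2 < r ^ 2 →
      b₁ ≤ b φ ψ ∧ b φ ψ ≤ b₂)
    (hsmooth : ∀ φ ψ : ℝ, r ^ 2 / 4 < φ ^ 2 + ψ ^ 2 → φ ^ 2 + ψ ^ 2 < r ^ 2 →
      DifferentiableAt ℝ (b φ) ψ ∧ DifferentiableAt ℝ (deriv (b φ)) ψ)
    (hK₁ : ∀ φ ψ : ℝ, r ^ 2 / 4 < φ ^ 2 + ψ ^ 2 → φ ^ 2 + ψ ^ 2 < r ^ 2 →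
      |deriv (b φ) ψ| ≤ K₁)
    (hK₂ : ∀ φ ψ : ℝ, r ^ 2 / 4 < φ ^ 2 + ψ ^ 2 → φ ^ 2 + ψ ^ 2 < r ^ 2 →
      |deriv (deriv (b φ)) ψ| ≤ K₂) :
    ∃ β : ℝ, 0 < β ∧
      ∀ φ ψ : ℝ, r ^ 2 / 4 < φ ^ 2 + ψ ^ 2 → φ ^ 2 + ψ ^ 2 < r ^ 2 →
        deriv (deriv (fun x : ℝ =>
            Real.exp (-β * r ^ 2) - Real.exp (-β * (x ^ 2 + ψ ^ 2)))) φ +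
        deriv (deriv (fun y : ℝ =>
            b φ y * (Real.exp (-β * r ^ 2) - Real.exp (-β * (φ ^ 2 + y ^ 2))))) ψ ≤ 0 :=
  stmt_10_general r b₁ b₂ K₁ K₂ b hr hb₁ hb hsmooth hK₁ hK₂
end

section
/- The ratio B'(q)/A'(q) = ρ³(q²)/(ρ(q²)+2q²ρ'(q²)) is positive and strictly increasing on (0, c_*). -/
open Set

lemma rho_hasDerivAt (γ t : ℝ) (hγ : 1 < γ) (ht : (γ - 1) / 2 * t < 1) :
    HasDerivAt (rho γ)
      (-(1/2) * (1 - (γ - 1) / 2 * t) ^ ((1:ℝ)/(γ-1) - 1)) t := by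
  have h0 : (0:ℝ) < 1 - (γ-1)/2 * t := by linarith
  have h1 : HasDerivAt (fun t : ℝ => 1 - (γ-1)/2 * t) (-((γ-1)/2)) t := by
    simpa using ((hasDerivAt_id t).const_mul ((γ-1)/2)).const_sub 1
  have h2 := h1.rpow_const (p := (1:ℝ)/(γ-1)) (Or.inl h0.ne')
  have hne : γ - 1 ≠ 0 := ne_of_gt (by linarith)
  have h3 : -((γ-1)/2) * ((1:ℝ)/(γ-1)) = -(1/2) := by
    field_simp
  unfold rho
  convert h2 using 1
  rw [← h3]

/-- The ratio `B'(q)/A'(q) = ρ³(q²)/(ρ(q²) + 2q²ρ'(q²))` is positive and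
strictly increasing on `(0, c_*)`. -/
theorem stmt_16 (γ : ℝ) (hγ : 1 < γ) :
    (∀ q ∈ Ioo (0 : ℝ) (cstar γ),
      0 < (rho γ (q ^ 2)) ^ 3 / (rho γ (q ^ 2) + 2 * q ^ 2 * deriv (rho γ) (q ^ 2))) ∧
    StrictMonoOn
      (fun q => (rho γ (q ^ 2)) ^ 3 / (rho γ (q ^ 2) + 2 * q ^ 2 * deriv (rho γ) (q ^ 2)))
      (Ioo (0 : ℝ) (cstar γ)) := by
  have hγ1 : (0:ℝ) < γ - 1 := by linarith
  have hγ2 : (0:ℝ) < γ + 1 := by linarith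
  set a : ℝ := (γ - 1)/2 with ha
  set b : ℝ := 1/(γ - 1) with hb
  set c : ℝ := (γ + 1)/2 with hc
  set p : ℝ := 2*b + 1 with hp
  have hap : a * p = c := by
    rw [hp, ha, hb, hc]; field_simp; ring
  have hb0 : 0 < b := by rw [hb]; positivity
  -- facts for q in the interval
  have hfacts : ∀ q ∈ Ioo (0:ℝ) (cstar γ), 0 < q ∧ c * q^2 < 1 ∧ 0 < 1 - c*q^2 ∧ 0 < 1 - a*q^2 := by
    intro q hq
    obtain ⟨hq0, hq1⟩ := hq
    have h2 : q^2 < 2/(γ+1) := by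
      rw [← Real.lt_sqrt hq0.le]
      exact hq1
    have hcq : c * q^2 < 1 := by
      rw [hc]
      have : (γ+1)/2 * q^2 < (γ+1)/2 * (2/(γ+1)) := by
        apply mul_lt_mul_of_pos_left h2 (by positivity)
      have e : (γ+1)/2 * (2/(γ+1)) = 1 := by field_simp
      linarith [e ▸ this]
    have hac : a * q^2 ≤ c * q^2 := by
      apply mul_le_mul_of_nonneg_right _ (sq_nonneg q)
      rw [ha, hc]; linarith
    exact ⟨hq0, hcq, by linarith, by linarith⟩
  -- the simplified function
  set F : ℝ → ℝ := fun q => (1 - a*q^2) ^ p / (1 - c*q^2) with hF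
  -- equality on the interval
  have heq : ∀ q ∈ Ioo (0:ℝ) (cstar γ),
      (rho γ (q ^ 2)) ^ 3 / (rho γ (q ^ 2) + 2 * q ^ 2 * deriv (rho γ) (q ^ 2)) = F q := by
    intro q hq
    obtain ⟨hq0, hcq, hD, hX⟩ := hfacts q hq
    set X : ℝ := 1 - a*q^2 with hXdef
    have hder : deriv (rho γ) (q^2) = -(1/2) * X ^ (b - 1) :=
      (rho_hasDerivAt γ (q^2) hγ (by rw [← ha]; linarith)).deriv
    have hrho : rho γ (q^2) = X ^ b := rfl
    rw [hder, hrho]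
    have hXne : X ≠ 0 := hX.ne'
    -- denominator
    have hden : X ^ b + 2 * q ^ 2 * (-(1/2) * X ^ (b-1)) = X ^ (b-1) * (1 - c*q^2) := by
      have h1 : X ^ b = X ^ (b-1) * X := by
        rw [← Real.rpow_add_one hXne (b-1), sub_add_cancel]
      rw [h1]
      have : X - q^2 = 1 - c*q^2 := by rw [hXdef, ha, hc]; ring
      rw [← this]; ring
    rw [hden]
    -- numerator
    have hnum : (X ^ b) ^ 3 = X ^ (b-1) * X ^ p := by
      rw [← Real.rpow_natCast (X ^ b) 3, ← Real.rpow_mul hX.le, ← Real.rpow_add hX]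
      congr 1
      rw [hp]; push_cast; ring
    rw [hnum, hF]
    rw [mul_div_mul_left _ _ (by positivity : X ^ (b-1) ≠ 0)]
  -- positivity
  have hFpos : ∀ q ∈ Ioo (0:ℝ) (cstar γ), 0 < F q := by
    intro q hq
    obtain ⟨hq0, hcq, hD, hX⟩ := hfacts q hq
    rw [hF]
    exact div_pos (Real.rpow_pos_of_pos hX p) hD
  -- derivative of F
  have hFderiv : ∀ q ∈ Ioo (0:ℝ) (cstar γ), HasDerivAt F
      ((2*c*q^3 * (1 - a*q^2) ^ (p-1)) / (1 - c*q^2)^2) q := by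
    intro q hq
    obtain ⟨hq0, hcq, hD, hX⟩ := hfacts q hq
    have hNq : HasDerivAt (fun q : ℝ => 1 - a*q^2) (-(2*a*q)) q := by
      have h := ((hasDerivAt_pow 2 q).const_mul a).const_sub 1
      exact h.congr_deriv (by simp; ring)
    have hN : HasDerivAt (fun q : ℝ => (1 - a*q^2) ^ p)
        ((-(2*a*q)) * p * (1 - a*q^2) ^ (p-1)) q :=
      hNq.rpow_const (Or.inl hX.ne')
    have hDq : HasDerivAt (fun q : ℝ => 1 - c*q^2) (-(2*c*q)) q := by
      have h := ((hasDerivAt_pow 2 q).const_mul c).const_sub 1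
      exact h.congr_deriv (by simp; ring)
    have h := hN.div hDq hD.ne'
    refine h.congr_deriv ?_
    symm
    have hXp : (1 - a*q^2) ^ p = (1 - a*q^2) ^ (p-1) * (1 - a*q^2) := by
      rw [← Real.rpow_add_one hX.ne' (p-1), sub_add_cancel]
    have hca : c - a = 1 := by rw [ha, hc]; ring
    rw [hXp]
    congr 1
    linear_combination (2*q*(1 - a*q^2)^(p-1)*(1 - c*q^2)) * hap
      - (2*c*q^3*(1 - a*q^2)^(p-1)) * hca
  -- strict mono of F
  have hFmono : StrictMonoOn F (Ioo (0:ℝ) (cstar γ)) := by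
    apply strictMonoOn_of_deriv_pos (convex_Ioo _ _)
    · intro q hq
      exact ((hFderiv q hq).differentiableAt.continuousAt).continuousWithinAt
    · intro q hq
      rw [interior_Ioo] at hq
      obtain ⟨hq0, hcq, hD, hX⟩ := hfacts q hq
      rw [(hFderiv q hq).deriv]
      have hc0 : 0 < c := by rw [hc]; linarith
      exact div_pos (by positivity) (pow_pos hD 2)
  constructor
  · intro q hq
    rw [heq q hq]
    exact hFpos q hq
  · exact (hFmono.congr (fun q hq => (heq q hq).symm))
end
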